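/- Let G be a temporal directed graph, S ⊆ V a set of entry vertices, DA ∈ V the target, N_b ⊆ V a set of blockable vertices with S ∩ N_b = ∅ and DA ∉ N_b, and [tα,tω] a time interval. Let B : N_b → {0,1} and R : V × {tα,…,tω} → {0,1} be any assignment satisfying: (a) R(u,t) ≥ R(v,t+1) − B(v) for every (u,v) ∈ E_t with v ∈ N_b, tα ≤ t, t+1 ≤ tω; (b) R(u,t) ≥ R(v,t+1) for every (u,v) ∈ E_t with v ∈ V \ N_b, tα ≤ t, t+1 ≤ tω; (c) R(u,t) ≥ R(u,t+1) for every u ∈ V and tα ≤ t ≤ tω−1; and (d) R(DA,t) = 1 for every t ∈ [tα,tω]. Then for every vertex u and every t ∈ [tα,tω]: if there exists a temporal (u,DA)-path within [t,tω] avoiding the blocked set {v ∈ N_b : B(v) = 1}, then R(u,t) = 1. Consequently, if Σ_{s∈S} Σ_{t=tα}^{tω} R(s,t) = 0, then {v ∈ N_b : B(v) = 1} is a temporal (S,DA)-cut within [tα,tω]. -/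
import Mathlib


/-- A temporal `(s,d)`-path within the time interval `[tα, tω]` in a temporal directed
graph on vertex type `V` with time-indexed edge relation `E`: a sequence of pairwise
distinct vertices `v 0 = s, …, v k = d` together with strictly increasing departure
times `t 1 < ⋯ < t k` (here `t i` is the time of the edge from `v i` to `v (i+1)`),
each edge present at its departure time, all departure times `≥ tα`, and arrival
`t k + 1 ≤ tω`.  The empty path (`k = 0`) requires `s = d`. -/
structure TPath (V : Type*) (E : ℕ → V → V → Prop) (s d : V) (tα tω : ℕ) where
  k : ℕ
  v : Fin (k + 1) → V
  t : Fin k → ℕ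
  hv0 : v 0 = s
  hvk : v (Fin.last k) = d
  inj : Function.Injective v
  mono : StrictMono t
  hedge : ∀ i : Fin k, E (t i) (v i.castSucc) (v i.succ)
  hstart : ∀ i : Fin k, tα ≤ t i
  hend : ∀ i : Fin k, t i + 1 ≤ tω

namespace TPath

variable {V : Type*} {E : ℕ → V → V → Prop} {s d : V} {tα tω : ℕ}

/-- Ending (arrival) time of a temporal path: `t k + 1`; the empty path arrives at `tα`. -/
def endTime (π : TPath V E s d tα tω) : ℕ :=
  if h : 0 < π.k then π.t ⟨π.k - 1, by omega⟩ + 1 else tα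

/-- `x` is the index of the first point of contact of the path `π` with the decoy set `C`:
`π.v x ∈ C`, and `x` is the least such index. -/
def hitsAt (π : TPath V E s d tα tω) (C : Set V) (x : Fin (π.k + 1)) : Prop :=
  π.v x ∈ C ∧ ∀ j : Fin (π.k + 1), π.v j ∈ C → x ≤ j

/-- Index of the first vertex of `π` lying in `C` (`sInf ∅ = 0` if there is none). -/
noncomputable def firstContact (π : TPath V E s d tα tω) (C : Set V) : ℕ :=
  sInf {i : ℕ | ∃ h : i < π.k + 1, π.v ⟨i, h⟩ ∈ C}

/-- Response time `RT(π, C) = t k − t x` where `v x` is the first point of contact of `π`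
with `C` (entered via the edge with time `t x`); junk value `0` if `π` does not meet `C`
properly. -/
noncomputable def RT (π : TPath V E s d tα tω) (C : Set V) : ℕ :=
  if h : 0 < π.firstContact C ∧ π.firstContact C ≤ π.k ∧ 0 < π.k then
    π.t ⟨π.k - 1, by omega⟩ - π.t ⟨π.firstContact C - 1, by omega⟩
  else 0

end TPath

/-- Earliest arrival time from the source set `S` to `x` within `[tα, tω]`
(`⊤ = ∞` if unreachable; it is `tα` for `x ∈ S`, realized by the empty path). -/
noncomputable def ea {V : Type*} (E : ℕ → V → V → Prop) (S : Set V) (tα tω : ℕ)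
    (x : V) : ℕ∞ :=
  sInf {n : ℕ∞ | ∃ s ∈ S, ∃ π : TPath V E s x tα tω, n = (π.endTime : ℕ∞)}

/-- `C` is a temporal `(S,d)`-cut within `[tα, tω]`: every temporal `(s,d)`-path within
`[tα, tω]` with `s ∈ S` contains a vertex of `C`. -/
def IsTemporalCut {V : Type*} (E : ℕ → V → V → Prop) (S : Set V) (d : V) (tα tω : ℕ)
    (C : Set V) : Prop :=
  ∀ s ∈ S, ∀ π : TPath V E s d tα tω, ∃ i, π.v i ∈ C

/-- soundness of the ILP constraints: any `{0,1}`-assignment `B` (blocking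
decisions on the blockable vertices `Nb`) and `R` (DA-reachability indicators) satisfying
the four constraint families (a)–(d) over-approximates reachability: whenever some
temporal `(u,DA)`-path within `[t, tω]` avoids the blocked set, `R u t = 1`.
Consequently, if `Σ_{s ∈ S} Σ_{t = tα}^{tω} R s t = 0` then the blocked set
`{x ∈ Nb | B x = 1}` is a temporal `(S,DA)`-cut within `[tα, tω]`. -/
theorem ilp_repair_soundness {V : Type*} [Fintype V] [DecidableEq V]
    (E : ℕ → V → V → Prop) (S : Finset V) (DA : V) (Nb : Set V) (tα tω : ℕ)
    (htαω : tα ≤ tω)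
    (hSNb : ∀ s ∈ S, s ∉ Nb) (hDANb : DA ∉ Nb)
    (B : V → ℤ) (R : V → ℕ → ℤ)
    (hB01 : ∀ x, B x = 0 ∨ B x = 1)
    (hR01 : ∀ x t, R x t = 0 ∨ R x t = 1)
    (ha : ∀ t u x, E t u x → x ∈ Nb → tα ≤ t → t + 1 ≤ tω → R x (t + 1) - B x ≤ R u t)
    (hb : ∀ t u x, E t u x → x ∉ Nb → tα ≤ t → t + 1 ≤ tω → R x (t + 1) ≤ R u t)
    (hc : ∀ u t, tα ≤ t → t + 1 ≤ tω → R u (t + 1) ≤ R u t)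
    (hd : ∀ t, tα ≤ t → t ≤ tω → R DA t = 1) :
    (∀ u t, tα ≤ t → t ≤ tω →
      (∃ π : TPath V E u DA t tω, ∀ i, π.v i ∉ {x | x ∈ Nb ∧ B x = 1}) → R u t = 1) ∧
    ((∑ s ∈ S, ∑ t ∈ Finset.Icc tα tω, R s t) = 0 →
      IsTemporalCut E ↑S DA tα tω {x | x ∈ Nb ∧ B x = 1}) := by
  classical
  have hmono : ∀ u a b, tα ≤ a → a ≤ b → b ≤ tω → R u b ≤ R u a := by
    intro u a b ha1 hab hb1
    induction b with
    | zero =>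
      have : a = 0 := by omega
      subst this; exact le_rfl
    | succ n ih =>
      rcases Nat.eq_or_lt_of_le hab with rfl | h
      · exact le_rfl
      · exact (hc u n (by omega) (by omega)).trans (ih (by omega) (by omega))
  have key : ∀ k u t, tα ≤ t → t ≤ tω →
      ∀ π : TPath V E u DA t tω, π.k = k →
      (∀ i, π.v i ∉ {x | x ∈ Nb ∧ B x = 1}) → R u t = 1 := by
    intro k
    induction k with
    | zero =>
      intro u t ht1 ht2 π hk havoid
      obtain ⟨n, v, tt, hv0, hvk, inj, mono, hedge, hstart, hend⟩ := π
      simp only at hk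
      subst hk
      have hu : u = DA := by
        rw [← hv0, ← hvk]
        congr 1
      exact hu ▸ hd t ht1 ht2
    | succ k ih =>
      intro u t ht1 ht2 π hk havoid
      obtain ⟨n, v, tt, hv0, hvk, inj, mono, hedge, hstart, hend⟩ := π
      simp only at hk havoid hedge hstart hend
      subst hk
      have htt0 : t ≤ tt 0 := hstart 0
      have htend : tt 0 + 1 ≤ tω := hend 0
      set x := v ((0 : Fin (k+1)).succ) with hx
      let π' : TPath V E x DA (tt 0 + 1) tω :=
        { k := k
          v := fun i => v i.succ
          t := fun i => tt i.succ
          hv0 := rfl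
          hvk := by
            show v (Fin.last k).succ = DA
            rw [Fin.succ_last]; exact hvk
          inj := fun i j h => Fin.succ_injective _ (inj h)
          mono := fun i j h => mono (Fin.succ_lt_succ_iff.mpr h)
          hedge := fun i => by
            have := hedge i.succ
            rwa [← Fin.succ_castSucc] at this
          hstart := fun i => by
            show tt 0 + 1 ≤ tt i.succ
            have : tt 0 < tt i.succ := mono (Fin.succ_pos i)
            omega
          hend := fun i => hend i.succ }
      have hR1 : R x (tt 0 + 1) = 1 := by
        apply ih x (tt 0 + 1) (by omega) htend π' rfl
        intro i
        exact havoid i.succ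
      have hedge0 : E (tt 0) u x := by
        have := hedge 0
        rwa [Fin.castSucc_zero, hv0] at this
      have hxC : x ∉ {y | y ∈ Nb ∧ B y = 1} := havoid _
      have hRu : (1:ℤ) ≤ R u (tt 0) := by
        by_cases hmem : x ∈ Nb
        · have hBx : B x = 0 := by
            rcases hB01 x with h | h
            · exact h
            · exact absurd ⟨hmem, h⟩ hxC
          have := ha (tt 0) u x hedge0 hmem (by omega) htend
          omega
        · have := hb (tt 0) u x hedge0 hmem (by omega) htend
          omega
      have := hmono u t (tt 0) ht1 htt0 (by omega)
      rcases hR01 u t with h | h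
      · omega
      · exact h
  refine ⟨fun u t ht1 ht2 h => by obtain ⟨π, hπ⟩ := h; exact key π.k u t ht1 ht2 π rfl hπ, ?_⟩
  intro hsum s hs π
  by_contra hno
  push_neg at hno
  have h1 : R s tα = 1 := key π.k s tα le_rfl htαω π rfl hno
  have hR0 : R s tα = 0 := by
    have hinner : ∀ s' ∈ S, (0:ℤ) ≤ ∑ t ∈ Finset.Icc tα tω, R s' t := by
      intro s' _
      apply Finset.sum_nonneg
      intro t _
      rcases hR01 s' t with h | h <;> omega
    have hsz : ∑ t ∈ Finset.Icc tα tω, R s t = 0 :=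
      (Finset.sum_eq_zero_iff_of_nonneg hinner).mp hsum s hs
    have hterm : ∀ t ∈ Finset.Icc tα tω, (0:ℤ) ≤ R s t := by
      intro t _; rcases hR01 s t with h | h <;> omega
    exact (Finset.sum_eq_zero_iff_of_nonneg hterm).mp hsz tα
      (Finset.mem_Icc.mpr ⟨le_rfl, htαω⟩)
  omega
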